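/- (Lemma F.2, σ_max case: second-moment bound) Under the setting of the matrix invariant (forward invariants for s_1,…,s_l with 0 < ‖r^{s_j}‖₁ ≤ r^s_max, backward invariants for t_1,…,t_l with entries of r^{t_j} in [0, r^t_max]), let σ_{s_j} := r^{s_j}/‖r^{s_j}‖₁, ‖Σ‖_{∞,1} := Σ_{u∈V} max_j σ_{s_j}(u), and σ := σ_max where σ_max(u) = max_j σ_{s_j}(u)/‖Σ‖_{∞,1}; assume σ(u) > 0 for all u ∈ V, and for u, v ∈ V set X(u,v) := R_S^T diag(1/σ) e_u e_v^T R_T ∈ ℝ^{l×l}. Define M₁ := Σ_{u,v∈V} σ(u) π_u(v) X(u,v) X(u,v)^T and M₂ := Σ_{u,v∈V} σ(u) π_u(v) X(u,v)^T X(u,v). Then max{‖M₁‖₂, ‖M₂‖₂} ≤ l ‖Σ‖_{∞,1} r^s_max r^t_max max{‖Π(S,T)‖_∞, ‖Π(S,T)‖₁}, where ‖A‖_∞ and ‖A‖₁ denote the maximum absolute row sum and maximum absolute column sum of A. -/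

import Mathlib

open scoped BigOperators
open Matrix

/-- The Neumann series `∑ (1-α)^i P^i` defining personalized PageRank. -/
noncomputable def pprSeries {V : Type*} [Fintype V] [DecidableEq V]
    (P : Matrix V V ℝ) (α : ℝ) : Matrix V V ℝ :=
  ∑' i : ℕ, (1 - α) ^ i • P ^ i

/-- Personalized PageRank row vector with jump distribution `σ`. -/
noncomputable def ppr {V : Type*} [Fintype V] [DecidableEq V]
    (P : Matrix V V ℝ) (α : ℝ) (σ : V → ℝ) : V → ℝ :=
  Matrix.vecMul (α • σ) (pprSeries P α)

/-- `π_s := π_{e_s}` where `e_s` is the indicator row vector of `s`. -/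
noncomputable def pprPoint {V : Type*} [Fintype V] [DecidableEq V]
    (P : Matrix V V ℝ) (α : ℝ) (s : V) : V → ℝ :=
  ppr P α (Pi.single s 1)

/-- Spectral (operator) norm of an `l × l` real matrix:
`‖A‖₂ = sup { ‖A x‖₂ : ‖x‖₂ = 1 }`. -/
noncomputable def specNorm {l : ℕ} (A : Matrix (Fin l) (Fin l) ℝ) : ℝ :=
  sSup {c : ℝ | ∃ x : Fin l → ℝ, (∑ j, x j ^ 2) = 1 ∧
    c = Real.sqrt (∑ i, (∑ j, A i j * x j) ^ 2)}

/-- Frobenius norm of an `l × l` real matrix. -/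
noncomputable def frobNorm {l : ℕ} (A : Matrix (Fin l) (Fin l) ℝ) : ℝ :=
  Real.sqrt (∑ i, ∑ j, A i j ^ 2)

/-!
Each `X(u,v)` has entries `r^{s_i}(u) / σ(u) · r^{t_j}(v)`, and since `σ(u) · ‖Σ‖_{∞,1}` is the
largest of the `σ_{s_j}(u)`, these entries are at most `B := ‖Σ‖_{∞,1} r^s_max r^t_max`. For a
nonnegative matrix `Y` with entries at most `B`, the row sums of `Y Yᵀ` are at most `l B` times
those of `Y`; so the row sums of `M₁` (resp. `M₂`) are at most `l B` times the row (resp. column)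
sums of the first moment `∑ σ(u) π_u(v) X(u,v) = R_Sᵀ Π R_T`. Substituting the backward invariant
into the forward one bounds that first moment entrywise by `Π(S,T)`. Finally `M₁` and `M₂` are
symmetric with nonnegative entries, so Schur's test bounds their spectral norms by their largest
row sums.
-/

open Finset

theorem specNorm_le_of_sum_row_le_of_sum_col_le {l : ℕ} (A : Matrix (Fin l) (Fin l) ℝ)
    (hA : ∀ i j, 0 ≤ A i j) {c : ℝ} (hc : 0 ≤ c)
    (hrow : ∀ i, ∑ j, A i j ≤ c) (hcol : ∀ j, ∑ i, A i j ≤ c) :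
    specNorm A ≤ c := by
  refine Real.sSup_le ?_ hc
  rintro _ ⟨x, hx, rfl⟩
  rw [Real.sqrt_le_left hc]
  have cauchySchwarz (i : Fin l) :
      (∑ j, A i j * x j) ^ 2 ≤ (∑ j, A i j) * ∑ j, A i j * x j ^ 2 :=
    sum_sq_le_sum_mul_sum_of_sq_le_mul _ (fun j _ => hA i j)
      (fun j _ => mul_nonneg (hA i j) (sq_nonneg _)) fun j _ => le_of_eq (by ring)
  calc ∑ i, (∑ j, A i j * x j) ^ 2
      ≤ ∑ i, c * ∑ j, A i j * x j ^ 2 := sum_le_sum fun i _ =>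
        (cauchySchwarz i).trans <| mul_le_mul_of_nonneg_right (hrow i) <|
          sum_nonneg fun j _ => mul_nonneg (hA i j) (sq_nonneg _)
    _ = c * ∑ j, (∑ i, A i j) * x j ^ 2 := by
        simp only [← mul_sum, sum_mul]
        rw [sum_comm]
    _ ≤ c * ∑ j, c * x j ^ 2 := by
        gcongr with j
        exact hcol j
    _ = c ^ 2 := by rw [← mul_sum, hx]; ring

theorem Matrix.IsSymm.specNorm_le_of_sum_row_le {l : ℕ} {A : Matrix (Fin l) (Fin l) ℝ}
    (hA : A.IsSymm) (hA0 : ∀ i j, 0 ≤ A i j) {c : ℝ} (hc : 0 ≤ c)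
    (hrow : ∀ i, ∑ j, A i j ≤ c) : specNorm A ≤ c :=
  specNorm_le_of_sum_row_le_of_sum_col_le A hA0 hc hrow fun j =>
    (sum_congr rfl fun i _ => hA.apply j i).trans_le (hrow j)

theorem Matrix.isSymm_sum_smul_mul_transpose {τ n : Type*} [Fintype τ] [Fintype n]
    (μ : τ → ℝ) (Y : τ → Matrix n n ℝ) : (∑ x, μ x • (Y x * (Y x)ᵀ)).IsSymm := by
  simp only [IsSymm, transpose_sum, transpose_smul, (isSymm_mul_transpose_self _).eq]

theorem Matrix.sum_mul_transpose_apply_le {ι κ : Type*} [Fintype ι] [Fintype κ]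
    (Y : Matrix ι κ ℝ) {B : ℝ} (hY0 : ∀ i k, 0 ≤ Y i k) (hYB : ∀ i k, Y i k ≤ B) (i : ι) :
    ∑ i', (Y * Yᵀ) i i' ≤ Fintype.card ι * B * ∑ k, Y i k :=
  calc ∑ i', (Y * Yᵀ) i i' = ∑ i' : ι, ∑ k, Y i k * Y i' k := by
        simp only [mul_apply, transpose_apply]
    _ ≤ ∑ i' : ι, ∑ k, Y i k * B :=
        sum_le_sum fun i' _ => sum_le_sum fun k _ => mul_le_mul_of_nonneg_left (hYB i' k) (hY0 i k)
    _ = Fintype.card ι * B * ∑ k, Y i k := by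
        rw [sum_const, card_univ, nsmul_eq_mul, ← sum_mul]; ring

theorem Matrix.sum_sum_smul_mul_transpose_apply_le {τ ι κ : Type*} [Fintype τ] [Fintype ι]
    [Fintype κ] {μ : τ → ℝ} (hμ : ∀ x, 0 ≤ μ x) {Y : τ → Matrix ι κ ℝ} {B : ℝ}
    (hY0 : ∀ x i k, 0 ≤ Y x i k) (hYB : ∀ x i k, Y x i k ≤ B) (i : ι) :
    ∑ i', (∑ x, μ x • (Y x * (Y x)ᵀ)) i i' ≤ Fintype.card ι * B * ∑ k, (∑ x, μ x • Y x) i k := by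
  simp only [Matrix.sum_apply, Matrix.smul_apply, smul_eq_mul]
  rw [sum_comm, sum_comm (γ := κ), mul_sum]
  refine sum_le_sum fun x _ => ?_
  rw [← mul_sum, ← mul_sum, mul_left_comm]
  exact mul_le_mul_of_nonneg_left (sum_mul_transpose_apply_le _ (hY0 x) (hYB x) i) (hμ x)

theorem specNorm_sum_smul_mul_transpose_le {τ : Type*} [Fintype τ] {l : ℕ} {μ : τ → ℝ}
    (hμ : ∀ x, 0 ≤ μ x) {Y : τ → Matrix (Fin l) (Fin l) ℝ} {B c : ℝ}
    (hY0 : ∀ x i k, 0 ≤ Y x i k) (hYB : ∀ x i k, Y x i k ≤ B) (hB : 0 ≤ B) (hc : 0 ≤ c)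
    (hrow : ∀ i, ∑ k, (∑ x, μ x • Y x) i k ≤ c) :
    specNorm (∑ x, μ x • (Y x * (Y x)ᵀ)) ≤ l * B * c := by
  refine (isSymm_sum_smul_mul_transpose μ Y).specNorm_le_of_sum_row_le (fun i j => ?_)
    (by positivity) fun i => ?_
  · simp only [Matrix.sum_apply, Matrix.smul_apply, smul_eq_mul, mul_apply, transpose_apply]
    exact sum_nonneg fun x _ => mul_nonneg (hμ x) <|
      sum_nonneg fun k _ => mul_nonneg (hY0 x i k) (hY0 x j k)
  · calc ∑ j, (∑ x, μ x • (Y x * (Y x)ᵀ)) i j ≤ l * B * ∑ k, (∑ x, μ x • Y x) i k := by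
          simpa only [Fintype.card_fin] using sum_sum_smul_mul_transpose_apply_le hμ hY0 hYB i
      _ ≤ l * B * c := by gcongr; exact hrow i

theorem specNorm_sum_smul_transpose_mul_le {τ : Type*} [Fintype τ] {l : ℕ} {μ : τ → ℝ}
    (hμ : ∀ x, 0 ≤ μ x) {Y : τ → Matrix (Fin l) (Fin l) ℝ} {B c : ℝ}
    (hY0 : ∀ x i k, 0 ≤ Y x i k) (hYB : ∀ x i k, Y x i k ≤ B) (hB : 0 ≤ B) (hc : 0 ≤ c)
    (hcol : ∀ j, ∑ k, (∑ x, μ x • Y x) k j ≤ c) :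
    specNorm (∑ x, μ x • ((Y x)ᵀ * Y x)) ≤ l * B * c := by
  simpa only [transpose_transpose] using
    specNorm_sum_smul_mul_transpose_le (Y := fun x => (Y x)ᵀ) hμ (fun x i k => hY0 x k i)
      (fun x i k => hYB x k i) hB hc fun j => by
        simpa only [← transpose_smul, ← transpose_sum, transpose_apply] using hcol j

theorem Matrix.sum_apply_le_iSup_sum_abs {ι κ : Type*} [Finite ι] [Fintype κ]
    (A : Matrix ι κ ℝ) (i : ι) : ∑ k, A i k ≤ ⨆ i, ∑ k, |A i k| :=
  (sum_le_sum fun _ _ => le_abs_self _).trans <|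
    le_ciSup (f := fun i => ∑ k, |A i k|) (Set.finite_range _).bddAbove i

theorem Matrix.transpose_mul_diagonal_mul_single_mul_apply {V ι : Type*} [Fintype V]
    [DecidableEq V] [Fintype ι] (A B : Matrix V ι ℝ) (d : V → ℝ) (u v : V) (i j : ι) :
    (Aᵀ * diagonal d * single u v (1 : ℝ) * B) i j = A u i * d u * B v j := by
  simp [mul_apply, single, diagonal_apply, ite_and]

theorem div_le_mul_of_eq_iSup_div_div {ι : Type*} [Finite ι] {r n : ι → ℝ} {R S σ : ℝ}
    (hr : ∀ j, 0 ≤ r j) (hn : ∀ j, 0 < n j) (hnR : ∀ j, n j ≤ R)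
    (hσ : σ = (⨆ j, r j / n j) / S) (hσpos : 0 < σ) (i : ι) : r i / σ ≤ S * R := by
  have hS : S ≠ 0 := by rintro rfl; simp [hσ] at hσpos
  have hmax : r i / n i ≤ σ * S := by
    rw [hσ, div_mul_cancel₀ _ hS]
    exact le_ciSup (f := fun j => r j / n j) (Set.finite_range _).bddAbove i
  have hσS : 0 ≤ σ * S := (div_nonneg (hr i) (hn i).le).trans hmax
  rw [div_le_iff₀ hσpos]
  calc r i ≤ σ * S * n i := (div_le_iff₀ (hn i)).1 hmax
    _ ≤ σ * S * R := mul_le_mul_of_nonneg_left (hnR i) hσS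
    _ = S * R * σ := by ring

theorem pprPoint_nonneg {V : Type*} [Fintype V] [DecidableEq V] {P : Matrix V V ℝ}
    (hP : ∀ u v, 0 ≤ P u v) {α : ℝ} (hα0 : 0 ≤ α) (hα1 : α ≤ 1) (u v : V) :
    0 ≤ pprPoint P α u v := by
  have hseries : 0 ≤ pprSeries P α u v := by
    by_cases hs : Summable fun n : ℕ => (1 - α) ^ n • P ^ n
    · refine (hs.hasSum.map (entryLinearMap ℝ ℝ u v) (by fun_prop)).nonneg fun n => ?_
      exact mul_nonneg (pow_nonneg (sub_nonneg.2 hα1) n) (pow_apply_nonneg hP n u v)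
    · simp [pprSeries, tsum_eq_zero_of_not_summable hs]
  simpa [pprPoint, ppr, vecMul, dotProduct, Pi.single_apply] using mul_nonneg hα0 hseries

theorem sum_sum_mul_mul_le_of_invariant {V : Type*} [Fintype V] (π : V → V → ℝ) {s t : V}
    {ps rs pt rt : V → ℝ} (hps : 0 ≤ ps t) (hrs : ∀ u, 0 ≤ rs u) (hpt : ∀ u, 0 ≤ pt u)
    (hfwd : π s t = ps t + ∑ u, rs u * π u t)
    (hbwd : ∀ u, π u t = pt u + ∑ v, π u v * rt v) :
    ∑ u, ∑ v, rs u * π u v * rt v ≤ π s t :=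
  calc ∑ u, ∑ v, rs u * π u v * rt v = ∑ u, rs u * ∑ v, π u v * rt v := by
        simp only [mul_sum, mul_assoc]
    _ ≤ ∑ u, rs u * π u t :=
        sum_le_sum fun u _ => mul_le_mul_of_nonneg_left (by linarith [hbwd u, hpt u]) (hrs u)
    _ ≤ π s t := by linarith

theorem stmt16_general {V : Type*} [Fintype V] [DecidableEq V] [Nonempty V]
    (P : Matrix V V ℝ) (hP0 : ∀ u v, 0 ≤ P u v)
    (α : ℝ) (hα0 : 0 < α) (hα1 : α < 1)
    (l : ℕ) (hl : 1 ≤ l) (s t : Fin l → V)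
    (rsmax rtmax : ℝ)
    (ps rs pt rt : Fin l → V → ℝ)
    (hps0 : ∀ j v, 0 ≤ ps j v) (hrs0 : ∀ j v, 0 ≤ rs j v)
    (hpt0 : ∀ j v, 0 ≤ pt j v) (hrt0 : ∀ j v, 0 ≤ rt j v)
    -- forward invariant for each s_j, with 0 < ‖r^{s_j}‖₁ ≤ r^s_max
    (hfwd : ∀ j u, pprPoint P α (s j) u = ps j u + ∑ x, rs j x * pprPoint P α x u)
    (hrspos : ∀ j, 0 < ∑ x, |rs j x|) (hrsub : ∀ j, ∑ x, |rs j x| ≤ rsmax)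
    -- backward invariant for each t_j, with entries of r^{t_j} in [0, r^t_max]
    (hbwd : ∀ j v, pprPoint P α v (t j) = pt j v + ∑ x, pprPoint P α v x * rt j x)
    (hrtub : ∀ j v, rt j v ≤ rtmax)
    (Snorm : ℝ)
    -- σ = σ_max
    (σ : V → ℝ) (hσdef : σ = fun u => (⨆ j, rs j u / ∑ x, |rs j x|) / Snorm)
    (hσpos : ∀ u, 0 < σ u)
    (RS RT : Matrix V (Fin l) ℝ)
    (hRS : RS = Matrix.of fun u j => rs j u) (hRT : RT = Matrix.of fun u j => rt j u)
    -- X(u,v) = R_Sᵀ diag(1/σ) e_u e_vᵀ R_T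
    (X : V → V → Matrix (Fin l) (Fin l) ℝ)
    (hX : X = fun u v => RSᵀ * Matrix.diagonal (fun x => 1 / σ x) *
      Matrix.single u v (1:ℝ) * RT)
    (PiST : Matrix (Fin l) (Fin l) ℝ)
    (hPiST : PiST = Matrix.of fun i j => pprPoint P α (s i) (t j))
    (M₁ M₂ : Matrix (Fin l) (Fin l) ℝ)
    (hM₁ : M₁ = ∑ u, ∑ v, (σ u * pprPoint P α u v) • (X u v * (X u v)ᵀ))
    (hM₂ : M₂ = ∑ u, ∑ v, (σ u * pprPoint P α u v) • ((X u v)ᵀ * X u v)) :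
    max (specNorm M₁) (specNorm M₂) ≤
      (l : ℝ) * Snorm * rsmax * rtmax *
        max (⨆ i, ∑ j, |PiST i j|) (⨆ j, ∑ i, |PiST i j|) := by
  set Mx := max (⨆ i, ∑ j, |PiST i j|) (⨆ j, ∑ i, |PiST i j|)
  have hXe : ∀ u v i j, X u v i j = rs i u / σ u * rt j v := fun u v i j => by
    simp only [hX, hRS, hRT, transpose_mul_diagonal_mul_single_mul_apply, of_apply, mul_one_div]
  have hX0 : ∀ (p : V × V) i j, 0 ≤ X p.1 p.2 i j := fun ⟨u, v⟩ i j => by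
    rw [hXe]; exact mul_nonneg (div_nonneg (hrs0 i u) (hσpos u).le) (hrt0 j v)
  have hXB : ∀ (p : V × V) i j, X p.1 p.2 i j ≤ Snorm * rsmax * rtmax := fun ⟨u, v⟩ i j => by
    have hrsσ :=
      div_le_mul_of_eq_iSup_div_div (hrs0 · u) hrspos hrsub (congrFun hσdef u) (hσpos u) i
    rw [hXe]
    exact mul_le_mul hrsσ (hrtub j v) (hrt0 j v) ((div_nonneg (hrs0 i u) (hσpos u).le).trans hrsσ)
  set μ : V × V → ℝ := fun p => σ p.1 * pprPoint P α p.1 p.2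
  have hμ : ∀ p, 0 ≤ μ p := fun p =>
    mul_nonneg (hσpos p.1).le (pprPoint_nonneg hP0 hα0.le hα1.le p.1 p.2)
  have hfirst : ∀ i j, (∑ p, μ p • X p.1 p.2) i j ≤ PiST i j := fun i j => by
    have hterm : ∀ p : V × V, μ p * X p.1 p.2 i j = rs i p.1 * pprPoint P α p.1 p.2 * rt j p.2 :=
      fun p => by simp only [hXe, μ]; field_simp [(hσpos p.1).ne']
    simpa only [Matrix.sum_apply, Matrix.smul_apply, smul_eq_mul, hterm, hPiST, of_apply,
      ← Fintype.sum_prod_type'] using sum_sum_mul_mul_le_of_invariant _ (hps0 i (t j)) (hrs0 i)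
        (hpt0 j) (hfwd i (t j)) (hbwd j)
  have hB : 0 ≤ Snorm * rsmax * rtmax :=
    (hX0 (Classical.arbitrary _) ⟨0, hl⟩ ⟨0, hl⟩).trans (hXB _ _ _)
  have hMx : 0 ≤ Mx :=
    (Real.iSup_nonneg fun i => sum_nonneg fun j _ => abs_nonneg (PiST i j)).trans (le_max_left _ _)
  rw [show (l : ℝ) * Snorm * rsmax * rtmax = l * (Snorm * rsmax * rtmax) by ring]
  refine max_le ?_ ?_
  · rw [hM₁, ← Fintype.sum_prod_type']
    exact specNorm_sum_smul_mul_transpose_le hμ hX0 hXB hB hMx fun i =>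
      (sum_le_sum fun k _ => hfirst i k).trans <|
        (PiST.sum_apply_le_iSup_sum_abs i).trans (le_max_left _ _)
  · rw [hM₂, ← Fintype.sum_prod_type']
    exact specNorm_sum_smul_transpose_mul_le hμ hX0 hXB hB hMx fun j =>
      (sum_le_sum fun k _ => hfirst k j).trans <|
        (PiSTᵀ.sum_apply_le_iSup_sum_abs j).trans (le_max_right _ _)

theorem stmt16 {V : Type*} [Fintype V] [DecidableEq V] [Nonempty V]
    (P : Matrix V V ℝ) (hP0 : ∀ u v, 0 ≤ P u v) (hP1 : ∀ u, ∑ v, P u v = 1)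
    (α : ℝ) (hα0 : 0 < α) (hα1 : α < 1)
    (l : ℕ) (hl : 1 ≤ l) (s t : Fin l → V)
    (rsmax rtmax : ℝ)
    (ps rs pt rt : Fin l → V → ℝ)
    (hps0 : ∀ j v, 0 ≤ ps j v) (hrs0 : ∀ j v, 0 ≤ rs j v)
    (hpt0 : ∀ j v, 0 ≤ pt j v) (hrt0 : ∀ j v, 0 ≤ rt j v)
    -- forward invariant for each s_j, with 0 < ‖r^{s_j}‖₁ ≤ r^s_max
    (hfwd : ∀ j u, pprPoint P α (s j) u = ps j u + ∑ x, rs j x * pprPoint P α x u)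
    (hrspos : ∀ j, 0 < ∑ x, |rs j x|) (hrsub : ∀ j, ∑ x, |rs j x| ≤ rsmax)
    -- backward invariant for each t_j, with entries of r^{t_j} in [0, r^t_max]
    (hbwd : ∀ j v, pprPoint P α v (t j) = pt j v + ∑ x, pprPoint P α v x * rt j x)
    (hrtub : ∀ j v, rt j v ≤ rtmax)
    -- ‖Σ‖_{∞,1} = Σ_u max_j σ_{s_j}(u), where σ_{s_j} = r^{s_j}/‖r^{s_j}‖₁
    (Snorm : ℝ) (hSnorm : Snorm = ∑ u, ⨆ j, rs j u / ∑ x, |rs j x|)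
    -- σ = σ_max
    (σ : V → ℝ) (hσdef : σ = fun u => (⨆ j, rs j u / ∑ x, |rs j x|) / Snorm)
    (hσpos : ∀ u, 0 < σ u)
    (RS RT : Matrix V (Fin l) ℝ)
    (hRS : RS = Matrix.of fun u j => rs j u) (hRT : RT = Matrix.of fun u j => rt j u)
    -- X(u,v) = R_Sᵀ diag(1/σ) e_u e_vᵀ R_T
    (X : V → V → Matrix (Fin l) (Fin l) ℝ)
    (hX : X = fun u v => RSᵀ * Matrix.diagonal (fun x => 1 / σ x) *
      Matrix.single u v (1:ℝ) * RT)
    (PiST : Matrix (Fin l) (Fin l) ℝ)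
    (hPiST : PiST = Matrix.of fun i j => pprPoint P α (s i) (t j))
    (M₁ M₂ : Matrix (Fin l) (Fin l) ℝ)
    (hM₁ : M₁ = ∑ u, ∑ v, (σ u * pprPoint P α u v) • (X u v * (X u v)ᵀ))
    (hM₂ : M₂ = ∑ u, ∑ v, (σ u * pprPoint P α u v) • ((X u v)ᵀ * X u v)) :
    max (specNorm M₁) (specNorm M₂) ≤
      (l : ℝ) * Snorm * rsmax * rtmax *
        max (⨆ i, ∑ j, |PiST i j|) (⨆ j, ∑ i, |PiST i j|) :=
  stmt16_general P hP0 α hα0 hα1 l hl s t rsmax rtmax ps rs pt rt hps0 hrs0 hpt0 hrt0 hfwd hrspos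
    hrsub hbwd hrtub Snorm σ hσdef hσpos RS RT hRS hRT X hX PiST hPiST M₁ M₂ hM₁ hM₂
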